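/- For every integer n ≥ 1, sum over k from 1 to n of s(n,k) * B_{k-1} * (-1)^k equals (-1)^n * n! / n^2. -/
import Mathlib


/-- Unsigned Stirling numbers of the first kind. -/
def S1u : ℕ → ℕ → ℕ
  | 0, 0 => 1
  | 0, _ + 1 => 0
  | _ + 1, 0 => 0
  | n + 1, k + 1 => n * S1u n (k + 1) + S1u n k

section Helpers
open Polynomial Finset

noncomputable def Lb : ℚ[X] →ₗ[ℚ] ℚ :=
  Polynomial.lsum fun j => LinearMap.toSpanSingleton ℚ ℚ (_root_.bernoulli j)

lemma Lb_monomial (k : ℕ) (a : ℚ) : Lb (monomial k a) = a * _root_.bernoulli k := by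
  simp [Lb, Polynomial.lsum_apply, Polynomial.sum_monomial_index,
    LinearMap.toSpanSingleton_apply, smul_eq_mul]

lemma Lb_comp_X_add_one (p : ℚ[X]) :
    Lb (p.comp (X + 1)) = Lb p + p.coeff 1 := by
  induction p using Polynomial.induction_on' with
  | add p q hp hq => simp only [add_comp, map_add, hp, hq, coeff_add]; ring
  | monomial k a =>
    have h1 : (monomial k a).comp (X + 1) = ∑ m ∈ range (k + 1), monomial m (a * (k.choose m)) := by
      rw [← C_mul_X_pow_eq_monomial, mul_comp, C_comp, X_pow_comp, add_pow, Finset.mul_sum]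
      refine Finset.sum_congr rfl fun m _ => ?_
      rw [← C_mul_X_pow_eq_monomial, one_pow, mul_one, ← C_eq_natCast, C_mul]
      ring
    rw [h1, map_sum]
    simp only [Lb_monomial]
    have h2 : ∑ m ∈ range (k + 1), a * (k.choose m) * _root_.bernoulli m
        = a * ((∑ m ∈ range k, (k.choose m : ℚ) * _root_.bernoulli m) + _root_.bernoulli k) := by
      rw [Finset.sum_range_succ, mul_add, Finset.mul_sum]
      simp [mul_assoc]
    rw [h2, _root_.sum_bernoulli, coeff_monomial]
    rcases eq_or_ne k 1 with h | h
    · simp [h]; ring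
    · simp [h, Ne.symm h]


lemma asc_coeff (n : ℕ) : ∀ k, (ascPochhammer ℚ n).coeff k = S1u n k := by
  induction n with
  | zero =>
    intro k
    cases k with
    | zero => simp [S1u, ascPochhammer]
    | succ k => simp [S1u, ascPochhammer, coeff_one]
  | succ n ih =>
    intro k
    rw [ascPochhammer_succ_right, ← C_eq_natCast, mul_add, mul_comm _ (C (n:ℚ)), coeff_add,
      coeff_C_mul]
    cases k with
    | zero =>
      rw [coeff_mul_X_zero, ih]
      have h0 : (S1u (n+1) 0 : ℚ) = 0 := by simp [S1u]
      rw [h0]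
      cases n with
      | zero => simp [S1u]
      | succ m => simp [S1u]
    | succ k =>
      rw [coeff_mul_X, ih, ih]
      have hrec : S1u (n+1) (k+1) = n * S1u n (k+1) + S1u n k := rfl
      rw [hrec]
      push_cast
      ring

lemma key (m : ℕ) :
    ((m : ℚ) + 1) * Lb ((ascPochhammer ℚ m).comp (X + 1)) = (Nat.factorial m : ℚ) := by
  set q : ℚ[X] := (ascPochhammer ℚ m).comp (X + 1) with hq
  have hP : ascPochhammer ℚ (m + 1) = X * q := ascPochhammer_succ_left (S := ℚ) m
  have hid : X * ((X * q).comp (X + 1)) = X * (q * (X + ((m : ℚ[X]) + 1))) := by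
    rw [← hP, ← ascPochhammer_succ_left]
    have hcomm : X * (q * (X + ((m : ℚ[X]) + 1))) = (X * q) * (X + ((m : ℚ[X]) + 1)) := by ring
    rw [hcomm, ← hP]
    have := ascPochhammer_succ_right ℚ (m + 1)
    push_cast at this ⊢
    exact this
  have h2 : (X * q).comp (X + 1) = q * (X + ((m : ℚ[X]) + 1)) :=
    mul_left_cancel₀ X_ne_zero hid
  have h3 := Lb_comp_X_add_one (X * q)
  rw [h2] at h3
  have h4 : (X * q).coeff 1 = q.coeff 0 := by
    rw [mul_comm, coeff_mul_X]
  have h5 : q * (X + ((m : ℚ[X]) + 1)) = X * q + ((m : ℚ) + 1) • q := by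
    rw [smul_eq_C_mul, C_add, C_1, C_eq_natCast]
    ring
  rw [h5, map_add, map_smul, h4, smul_eq_mul] at h3
  have h6 : q.coeff 0 = (Nat.factorial m : ℚ) := by
    rw [coeff_zero_eq_eval_zero, hq, eval_comp]
    simp
  linarith [h3, h6]

lemma Lb_sum (m : ℕ) : Lb ((ascPochhammer ℚ m).comp (X + 1)) =
    ∑ j ∈ range (m + 1), (S1u (m + 1) (j + 1) : ℚ) * _root_.bernoulli j := by
  set q : ℚ[X] := (ascPochhammer ℚ m).comp (X + 1) with hq
  have hcoeff : ∀ j, q.coeff j = (S1u (m + 1) (j + 1) : ℚ) := by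
    intro j
    have : q.coeff j = (X * q).coeff (j + 1) := by rw [mul_comm, coeff_mul_X]
    rw [this, ← ascPochhammer_succ_left (S := ℚ) m, asc_coeff]
  have hdeg : q.natDegree < m + 1 := by
    have h1 : (X + 1 : ℚ[X]) = X + C 1 := by simp
    have : q.natDegree = m * 1 := by
      rw [hq, natDegree_comp, ascPochhammer_natDegree, h1, natDegree_X_add_C]
    omega
  have : Lb q = q.sum fun j a => a • _root_.bernoulli j := by
    simp [Lb, Polynomial.lsum_apply, LinearMap.toSpanSingleton_apply]
  rw [this, Polynomial.sum_over_range' q (by simp) (m + 1) hdeg]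
  exact Finset.sum_congr rfl fun j _ => by rw [hcoeff j, smul_eq_mul]


lemma main_aux (n : ℕ) (hn : 1 ≤ n) :
    ∑ k ∈ Finset.Icc 1 n,
      ((-1 : ℚ) ^ (n - k) * S1u n k) * _root_.bernoulli (k - 1) * (-1) ^ k =
      (-1) ^ n * (Nat.factorial n) / (n ^ 2 : ℚ) := by
  obtain ⟨m, rfl⟩ : ∃ m, n = m + 1 := ⟨n - 1, by omega⟩
  have hsign : ∀ k ∈ Finset.Icc 1 (m + 1),
      ((-1 : ℚ) ^ (m + 1 - k) * S1u (m + 1) k) * _root_.bernoulli (k - 1) * (-1) ^ k =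
      (-1) ^ (m + 1) * ((S1u (m + 1) k : ℚ) * _root_.bernoulli (k - 1)) := by
    intro k hk
    rw [Finset.mem_Icc] at hk
    have : ((-1 : ℚ)) ^ (m + 1 - k) * (-1) ^ k = (-1) ^ (m + 1) := by
      rw [← pow_add, Nat.sub_add_cancel hk.2]
    calc ((-1 : ℚ) ^ (m + 1 - k) * S1u (m + 1) k) * _root_.bernoulli (k - 1) * (-1) ^ k
        = ((-1 : ℚ)) ^ (m + 1 - k) * (-1) ^ k * ((S1u (m + 1) k : ℚ) * _root_.bernoulli (k - 1)) := by ring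
      _ = (-1) ^ (m + 1) * ((S1u (m + 1) k : ℚ) * _root_.bernoulli (k - 1)) := by rw [this]
  rw [Finset.sum_congr rfl hsign, ← Finset.mul_sum]
  have hre : ∑ k ∈ Finset.Icc 1 (m + 1), (S1u (m + 1) k : ℚ) * _root_.bernoulli (k - 1)
      = ∑ j ∈ range (m + 1), (S1u (m + 1) (j + 1) : ℚ) * _root_.bernoulli j := by
    rw [show Finset.Icc 1 (m + 1) = Finset.Ico 1 (m + 2) from rfl, Finset.sum_Ico_eq_sum_range]
    simp [add_comm]
  rw [hre, ← Lb_sum m]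
  have hk := key m
  have hm1 : ((m : ℚ) + 1) ≠ 0 := by positivity
  have : Lb ((ascPochhammer ℚ m).comp (X + 1)) = (Nat.factorial m : ℚ) / ((m : ℚ) + 1) := by
    field_simp at hk ⊢
    linarith
  rw [this]
  rw [Nat.factorial_succ]
  push_cast
  field_simp

end Helpers

theorem stirling1_bernoulli_alternating (n : ℕ) (hn : 1 ≤ n) :
    ∑ k ∈ Finset.Icc 1 n,
      ((-1 : ℚ) ^ (n - k) * S1u n k) * bernoulli (k - 1) * (-1) ^ k =
      (-1) ^ n * (Nat.factorial n) / (n ^ 2 : ℚ) :=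
  main_aux n hn
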